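/- Let (V̄, Ē) be a finite oriented graph with internal vertices V, boundary vertices ∂V, edge set Ē = E ∪ ∂E, and boundary temperatures T_j > 0 for j ∈ ∂V. Fix O ∈ ℝ₊^V̄ with O_j = T_j for all j ∈ ∂V and K ∈ ℕ₀^V̄. Let D(O, K) := ∏_{i∈V̄} O_i^{K_i}. Then the duality identity L^O [O ↦ D(O, K)](O) = L^K_0 [K ↦ D(O, K)](K) holds, where L^O acts on the O variables and L^K_0 (the discrete KMP generator with absorbing boundary) acts on the K variables. -/

import Mathlib

/-!
Both generators are sums over edges, and on an edge `(i, j)` the duality function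
`∏ O_ℓ ^ K_ℓ` only sees the two factors at `i` and `j`. The opinion move replaces `O_i`
(and `O_j` if `j` is internal) by `m = v O_i + (1 - v) O_j` with `v` uniform, and
`∫₀¹ (v A + (1 - v) B) ^ n dv = (n + 1)⁻¹ ∑_{h ≤ n} A ^ h B ^ (n - h)`, which is exactly the
average over the KMP move putting `h` of the `n` particles on `i`, `h` uniform in `{0, …, n}`.
For an interior edge `n = K_i + K_j`; for a boundary edge `O_j` is frozen, so `n = K_i` and
the `K_j` particles already at `j` stay there.
-/

open MeasureTheory Finset

noncomputable section

/-- Update two coordinates of a configuration. -/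
def upd2 {V : Type*} [DecidableEq V] {α : Type*} (x : V → α) (i j : V) (a b : α) : V → α :=
  Function.update (Function.update x i a) j b

/-- Generator of the opinion model on the edge set `Ebar`, with stubborn individuals at
the boundary vertices `bd`. -/
noncomputable def LO {V : Type*} [Fintype V] [DecidableEq V]
    (Ebar : Finset (V × V)) (bd : Finset V)
    (f : (V → ℝ) → ℝ) (O : V → ℝ) : ℝ :=
  ∑ e ∈ Ebar, ∫ v in (0:ℝ)..1,
    (f (fun ℓ => if (ℓ = e.1 ∨ ℓ = e.2) ∧ ℓ ∉ bd
          then v * O e.1 + (1 - v) * O e.2 else O ℓ) - f O)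

/-- Generator of the discrete KMP process with particles absorbed at the boundary. -/
noncomputable def LK0 {V : Type*} [Fintype V] [DecidableEq V]
    (Eint Ebd : Finset (V × V)) (f : (V → ℕ) → ℝ) (k : V → ℕ) : ℝ :=
  (∑ e ∈ Eint, (1 / (k e.1 + k e.2 + 1 : ℝ)) *
      ∑ h ∈ Finset.range (k e.1 + k e.2 + 1),
        (f (upd2 k e.1 e.2 h (k e.1 + k e.2 - h)) - f k))
  + ∑ e ∈ Ebd, (1 / (k e.1 + 1 : ℝ)) *
      ∑ h ∈ Finset.range (k e.1 + 1),
        (f (upd2 k e.1 e.2 h (k e.1 + k e.2 - h)) - f k)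

lemma integral_convexComb_pow (A B : ℝ) (n : ℕ) :
    ∫ v in (0:ℝ)..1, (v * A + (1 - v) * B) ^ n
      = (∑ h ∈ range (n + 1), A ^ h * B ^ (n - h)) / (n + 1) := by
  rcases eq_or_ne A B with rfl | hAB
  · have hsum : ∑ h ∈ range (n + 1), A ^ h * A ^ (n - h) = (n + 1) * A ^ n := by
      rw [sum_congr rfl fun h hh => by
        rw [← pow_add, Nat.add_sub_cancel' (Nat.lt_succ_iff.mp (mem_range.mp hh))]]
      simp
    simp only [show ∀ v : ℝ, v * A + (1 - v) * A = A by intro v; ring]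
    rw [intervalIntegral.integral_const, hsum]
    field_simp
    simp
  · have hAB' : A - B ≠ 0 := sub_ne_zero.mpr hAB
    -- substitute `u = (A - B) v + B` and use `(A - B) ∑ A^h B^(n-h) = A^(n+1) - B^(n+1)`
    simp only [show ∀ v : ℝ, v * A + (1 - v) * B = (A - B) * v + B by intro v; ring]
    have hgeom := geom_sum₂_mul A B (n + 1)
    rw [Nat.add_sub_cancel] at hgeom
    rw [intervalIntegral.integral_comp_mul_add (· ^ n) hAB', mul_zero, zero_add, mul_one,
      sub_add_cancel, integral_pow, smul_eq_mul, ← hgeom]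
    field_simp

lemma integral_convexComb_pow_mul_sub (A B c d : ℝ) (n : ℕ) :
    ∫ v in (0:ℝ)..1, ((v * A + (1 - v) * B) ^ n * c - d)
      = 1 / (n + 1) * ∑ h ∈ range (n + 1), (A ^ h * B ^ (n - h) * c - d) := by
  have hint : IntervalIntegrable (fun v : ℝ => (v * A + (1 - v) * B) ^ n * c) volume 0 1 :=
    (by fun_prop : Continuous _).intervalIntegrable _ _
  rw [intervalIntegral.integral_sub hint intervalIntegrable_const,
    intervalIntegral.integral_mul_const, integral_convexComb_pow, intervalIntegral.integral_const,
    sum_sub_distrib, ← sum_mul, sum_const, card_range]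
  field_simp
  ring

section Configurations

variable {V : Type*} [DecidableEq V] {i j : V}

lemma upd2_self {α : Type*} (x : V → α) : upd2 x i j (x i) (x j) = x := by
  simp only [upd2, Function.update_eq_self]

lemma upd2_apply_of_ne {α : Type*} {ℓ : V} (x : V → α) (a b : α) (hi : ℓ ≠ i) (hj : ℓ ≠ j) :
    upd2 x i j a b ℓ = x ℓ := by
  rw [upd2, Function.update_of_ne hj, Function.update_of_ne hi]

lemma prod_pow_upd2 [Fintype V] (hij : i ≠ j) (x : V → ℝ) (k : V → ℕ) (a b : ℝ) (p q : ℕ) :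
    ∏ ℓ, upd2 x i j a b ℓ ^ upd2 k i j p q ℓ = a ^ p * b ^ q * ∏ ℓ ∈ {i, j}ᶜ, x ℓ ^ k ℓ := by
  have hrest : ∀ ℓ ∈ ({i, j}ᶜ : Finset V),
      upd2 x i j a b ℓ ^ upd2 k i j p q ℓ = x ℓ ^ k ℓ := by
    intro ℓ hℓ
    simp only [mem_compl, mem_insert, mem_singleton, not_or] at hℓ
    rw [upd2_apply_of_ne x a b hℓ.1 hℓ.2, upd2_apply_of_ne k p q hℓ.1 hℓ.2]
  rw [← prod_mul_prod_compl {i, j}, prod_pair hij, prod_congr rfl hrest]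
  simp only [upd2, Function.update_self, Function.update_of_ne hij]

/-- The paper's `H^O_{ij;v} O` is `opinionUpdate bd O i j (v * O i + (1 - v) * O j)`. -/
def opinionUpdate (bd : Finset V) (O : V → ℝ) (i j : V) (m : ℝ) : V → ℝ :=
  fun ℓ => if (ℓ = i ∨ ℓ = j) ∧ ℓ ∉ bd then m else O ℓ

lemma opinionUpdate_eq_upd2_of_notMem {bd : Finset V} (O : V → ℝ) (m : ℝ)
    (hi : i ∉ bd) (hj : j ∉ bd) :
    opinionUpdate bd O i j m = upd2 O i j m m := by
  ext ℓ
  by_cases hℓj : ℓ = j <;> by_cases hℓi : ℓ = i <;> simp_all [opinionUpdate, upd2]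

lemma opinionUpdate_eq_upd2_of_mem {bd : Finset V} (O : V → ℝ) (m : ℝ)
    (hi : i ∉ bd) (hj : j ∈ bd) :
    opinionUpdate bd O i j m = upd2 O i j m (O j) := by
  ext ℓ
  by_cases hℓj : ℓ = j <;> by_cases hℓi : ℓ = i <;> simp_all [opinionUpdate, upd2]

end Configurations

section EdgeDuality

variable {V : Type*} [Fintype V] [DecidableEq V] {bd : Finset V} {i j : V}

lemma edge_duality_interior (hi : i ∉ bd) (hj : j ∉ bd) (hij : i ≠ j) (O : V → ℝ) (K : V → ℕ) :
    ∫ v in (0:ℝ)..1,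
        (∏ ℓ, opinionUpdate bd O i j (v * O i + (1 - v) * O j) ℓ ^ K ℓ - ∏ ℓ, O ℓ ^ K ℓ)
      = 1 / (K i + K j + 1 : ℝ) * ∑ h ∈ range (K i + K j + 1),
          (∏ ℓ, O ℓ ^ upd2 K i j h (K i + K j - h) ℓ - ∏ ℓ, O ℓ ^ K ℓ) := by
  have hopinion := fun m => prod_pow_upd2 hij O K m m (K i) (K j)
  have hkmp := fun p q => prod_pow_upd2 hij O K (O i) (O j) p q
  simp only [upd2_self] at hopinion hkmp
  simp only [opinionUpdate_eq_upd2_of_notMem O _ hi hj, hopinion, hkmp, ← pow_add]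
  exact_mod_cast integral_convexComb_pow_mul_sub (O i) (O j) _ _ (K i + K j)

lemma edge_duality_boundary (hi : i ∉ bd) (hj : j ∈ bd) (O : V → ℝ) (K : V → ℕ) :
    ∫ v in (0:ℝ)..1,
        (∏ ℓ, opinionUpdate bd O i j (v * O i + (1 - v) * O j) ℓ ^ K ℓ - ∏ ℓ, O ℓ ^ K ℓ)
      = 1 / (K i + 1 : ℝ) * ∑ h ∈ range (K i + 1),
          (∏ ℓ, O ℓ ^ upd2 K i j h (K i + K j - h) ℓ - ∏ ℓ, O ℓ ^ K ℓ) := by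
  have hij : i ≠ j := fun h => hi (h ▸ hj)
  have hopinion := fun m => prod_pow_upd2 hij O K m (O j) (K i) (K j)
  have hkmp := fun p q => prod_pow_upd2 hij O K (O i) (O j) p q
  simp only [upd2_self] at hopinion hkmp
  simp only [opinionUpdate_eq_upd2_of_mem O _ hi hj, hopinion, hkmp]
  set C := ∏ ℓ ∈ {i, j}ᶜ, O ℓ ^ K ℓ
  have habsorbed : ∀ h ∈ range (K i + 1), O i ^ h * O j ^ (K i + K j - h) * C
      = O i ^ h * O j ^ (K i - h) * (O j ^ K j * C) := by
    intro h hh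
    rw [Nat.sub_add_comm (Nat.lt_succ_iff.mp (mem_range.mp hh)), pow_add]
    ring
  rw [sum_congr rfl fun h hh => congrArg (· - _) (habsorbed h hh)]
  simp only [mul_assoc _ (O j ^ K j) C]
  exact integral_convexComb_pow_mul_sub (O i) (O j) _ _ (K i)

end EdgeDuality

theorem opinion_discreteKMP_duality
    {V : Type*} [Fintype V] [DecidableEq V]
    (bd : Finset V) (Eint Ebd : Finset (V × V))
    (hE : ∀ e ∈ Eint, e.1 ∉ bd ∧ e.2 ∉ bd ∧ e.1 ≠ e.2)
    (hEb : ∀ e ∈ Ebd, e.1 ∉ bd ∧ e.2 ∈ bd)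
    (hdisj : Disjoint Eint Ebd)
    (O : V → ℝ)
    (K : V → ℕ) :
    LO (Eint ∪ Ebd) bd (fun O' => ∏ i, (O' i) ^ (K i)) O
      = LK0 Eint Ebd (fun K' => ∏ i, (O i) ^ (K' i)) K := by
  rw [LO, LK0, sum_union hdisj]
  congr 1
  · refine sum_congr rfl fun e he => ?_
    obtain ⟨hi, hj, hij⟩ := hE e he
    exact edge_duality_interior hi hj hij O K
  · refine sum_congr rfl fun e he => ?_
    obtain ⟨hi, hj⟩ := hEb e he
    exact edge_duality_boundary hi hj O K

end
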